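/- For K ∈ 𝒦(p,q), equality |E(K)| = 2·C(p,2)·C(q,2) holds if and only if K = K_p ⊗ K_q, the tensor product of the complete graphs on p and q vertices. -/

import Mathlib

open SimpleGraph

variable {α β : Type*}

/-- The tensor (categorical / direct) product of two simple graphs:
`(g,h)` and `(g',h')` are adjacent iff `g ~ g'` in `G` and `h ~ h'` in `H`. -/
def tensorProd (G : SimpleGraph α) (H : SimpleGraph β) : SimpleGraph (α × β) where
  Adj x y := G.Adj x.1 y.1 ∧ H.Adj x.2 y.2
  symm := ⟨fun _ _ h => ⟨h.1.symm, h.2.symm⟩⟩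
  loopless := ⟨fun x h => G.loopless.irrefl x.1 h.1⟩

infixl:70 " ⊗t " => tensorProd

@[simp] lemma tensorProd_adj (G : SimpleGraph α) (H : SimpleGraph β) (x y : α × β) :
    (G ⊗t H).Adj x y ↔ G.Adj x.1 y.1 ∧ H.Adj x.2 y.2 := Iff.rfl

/-- The 2-sum (sum modulo 2) of two graphs on a common vertex set: the edge set is
the symmetric difference of the two edge sets. -/
def twoSum (G H : SimpleGraph α) : SimpleGraph α where
  Adj u v := (G.Adj u v ∧ ¬ H.Adj u v) ∨ (H.Adj u v ∧ ¬ G.Adj u v)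
  symm := ⟨fun u v h => h.imp (fun h' => ⟨h'.1.symm, fun hh => h'.2 hh.symm⟩)
    (fun h' => ⟨h'.1.symm, fun hh => h'.2 hh.symm⟩)⟩
  loopless := ⟨fun u h => h.elim (fun h' => G.loopless.irrefl u h'.1) (fun h' => H.loopless.irrefl u h'.1)⟩

@[simp] lemma twoSum_adj (G H : SimpleGraph α) (u v : α) :
    (twoSum G H).Adj u v ↔ (G.Adj u v ∧ ¬ H.Adj u v) ∨ (H.Adj u v ∧ ¬ G.Adj u v) := Iff.rfl

/-- The iterated 2-sum `⊕_{k=1}^l F k` (`⊥`, the empty graph, is the neutral element). -/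
def twoSumMany {l : ℕ} (F : Fin l → SimpleGraph α) : SimpleGraph α :=
  (List.ofFn F).foldr twoSum ⊥

/-- `K ∈ 𝒦(p,q)`: `K` is a 2-sum `⊕_{k=1}^l (G_k ⊗ H_k)` of tensor products, where every
`G_k` is a graph on `p` fixed vertices with at least one edge and every `H_k` is a graph on
`q` fixed vertices with at least one edge. -/
def MemK (p q : ℕ) (K : SimpleGraph (Fin p × Fin q)) : Prop :=
  ∃ (l : ℕ) (G : Fin l → SimpleGraph (Fin p)) (H : Fin l → SimpleGraph (Fin q)),
    0 < l ∧ (∀ k, ∃ a b, (G k).Adj a b) ∧ (∀ k, ∃ c d, (H k).Adj c d) ∧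
    K = twoSumMany fun k => (G k) ⊗t (H k)

/-- A graph on `α × β` is cross-like if `(a,b) ~ (c,d)` implies `(a,d) ~ (c,b)`. -/
def CrossLike (K : SimpleGraph (α × β)) : Prop :=
  ∀ a c : α, ∀ b d : β, K.Adj (a, b) (c, d) → K.Adj (a, d) (c, b)

/-- The graph with the single edge `{a,b}` (for `a ≠ b`). -/
def singleEdge (a b : α) : SimpleGraph α := fromEdgeSet {s(a, b)}

/-- The tensor-elementary graph `E(i,i';j,j')`: the tensor product of the single-edge
graph with edge `{g_i, g_{i'}}` and the single-edge graph with edge `{h_j, h_{j'}}`. -/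
def tensorElem {p q : ℕ} (i i' : Fin p) (j j' : Fin q) : SimpleGraph (Fin p × Fin q) :=
  singleEdge i i' ⊗t singleEdge j j'

/-!
Every summand `G_k ⊗ H_k` of a member of `𝒦(p,q)` is a subgraph of `K_p ⊗ K_q`, and a 2-sum never
has edges outside the union of its summands, so `K ≤ K_p ⊗ K_q`. By the handshake lemma,
`|E(G ⊗ H)| = 2 |E(G)| |E(H)|`, so `K_p ⊗ K_q` has exactly `2·C(p,2)·C(q,2)` edges, and a subgraph
with as many edges as the whole graph is the whole graph.
-/

open Finset

namespace SimpleGraph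

theorem eq_of_le_of_card_edgeFinset_le {G H : SimpleGraph α} [Fintype G.edgeSet]
    [Fintype H.edgeSet] (hle : G ≤ H) (hcard : #H.edgeFinset ≤ #G.edgeFinset) : G = H :=
  edgeFinset_inj.1 (eq_of_subset_of_card_le (edgeFinset_mono hle) hcard)

theorem twoSum_le_sup (G H : SimpleGraph α) : twoSum G H ≤ G ⊔ H :=
  fun _ _ h => h.imp And.left And.left

theorem foldr_twoSum_le {L : List (SimpleGraph α)} {T : SimpleGraph α} (h : ∀ G ∈ L, G ≤ T) :
    L.foldr twoSum ⊥ ≤ T := by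
  induction L with
  | nil => exact bot_le
  | cons G L ih =>
    rw [List.forall_mem_cons] at h
    exact (twoSum_le_sup _ _).trans (sup_le h.1 (ih h.2))

theorem twoSumMany_le {l : ℕ} {F : Fin l → SimpleGraph α} {T : SimpleGraph α}
    (h : ∀ k, F k ≤ T) : twoSumMany F ≤ T :=
  foldr_twoSum_le fun _ hG => by
    obtain ⟨k, rfl⟩ := List.mem_ofFn.1 hG
    exact h k

theorem tensorProd_mono {G G' : SimpleGraph α} {H H' : SimpleGraph β} (hG : G ≤ G')
    (hH : H ≤ H') : G ⊗t H ≤ G' ⊗t H' :=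
  fun _ _ h => ⟨hG h.1, hH h.2⟩

instance tensorProd.decidableAdj (G : SimpleGraph α) (H : SimpleGraph β) [DecidableRel G.Adj]
    [DecidableRel H.Adj] : DecidableRel (G ⊗t H).Adj :=
  fun x y => inferInstanceAs (Decidable (G.Adj x.1 y.1 ∧ H.Adj x.2 y.2))

section Finite

variable [Fintype α] [Fintype β] (G : SimpleGraph α) (H : SimpleGraph β) [DecidableRel G.Adj]
  [DecidableRel H.Adj]

theorem neighborFinset_tensorProd (v : α × β) :
    (G ⊗t H).neighborFinset v = G.neighborFinset v.1 ×ˢ H.neighborFinset v.2 := by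
  ext
  simp

theorem degree_tensorProd (v : α × β) : (G ⊗t H).degree v = G.degree v.1 * H.degree v.2 := by
  rw [← card_neighborFinset_eq_degree, neighborFinset_tensorProd, card_product,
    card_neighborFinset_eq_degree, card_neighborFinset_eq_degree]

theorem card_edgeFinset_tensorProd :
    #(G ⊗t H).edgeFinset = 2 * (#G.edgeFinset * #H.edgeFinset) := by
  have hsum : 2 * #(G ⊗t H).edgeFinset = 2 * #G.edgeFinset * (2 * #H.edgeFinset) :=
    calc 2 * #(G ⊗t H).edgeFinset = ∑ v, (G ⊗t H).degree v :=
          ((G ⊗t H).sum_degrees_eq_twice_card_edges).symm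
      _ = ∑ a, ∑ b, G.degree a * H.degree b := by
          simp only [Fintype.sum_prod_type, degree_tensorProd]
      _ = (∑ a, G.degree a) * ∑ b, H.degree b := (sum_mul_sum _ _ _ _).symm
      _ = 2 * #G.edgeFinset * (2 * #H.edgeFinset) := by
          rw [sum_degrees_eq_twice_card_edges, sum_degrees_eq_twice_card_edges]
  linarith

end Finite

end SimpleGraph

theorem MemK.le_top_tensorProd_top {p q : ℕ} {K : SimpleGraph (Fin p × Fin q)} (hK : MemK p q K) :
    K ≤ (⊤ : SimpleGraph (Fin p)) ⊗t (⊤ : SimpleGraph (Fin q)) := by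
  obtain ⟨l, G, H, -, -, -, rfl⟩ := hK
  exact twoSumMany_le fun _ => tensorProd_mono le_top le_top

/-- For `K ∈ 𝒦(p,q)`, equality `|E(K)| = 2·C(p,2)·C(q,2)` holds if and only if
`K = K_p ⊗ K_q`. -/
theorem memK_card_edges_eq_iff (p q : ℕ) (K : SimpleGraph (Fin p × Fin q))
    [Fintype K.edgeSet] (hK : MemK p q K) :
    K.edgeFinset.card = 2 * (p.choose 2 * q.choose 2) ↔
      K = (⊤ : SimpleGraph (Fin p)) ⊗t (⊤ : SimpleGraph (Fin q)) := by
  have hcard_top : #((⊤ : SimpleGraph (Fin p)) ⊗t (⊤ : SimpleGraph (Fin q))).edgeFinset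
      = 2 * (p.choose 2 * q.choose 2) := by
    rw [card_edgeFinset_tensorProd, card_edgeFinset_top_eq_card_choose_two,
      card_edgeFinset_top_eq_card_choose_two, Fintype.card_fin, Fintype.card_fin]
  refine ⟨fun hcard => ?_, ?_⟩
  · exact eq_of_le_of_card_edgeFinset_le hK.le_top_tensorProd_top (hcard_top.trans hcard.symm).le
  · rintro rfl
    convert hcard_top
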